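/- (Mirsky's theorem, Frobenius-norm case) For real symmetric N×N matrices U and V with eigenvalues λ₁(U) ≥ … ≥ λ_N(U) and λ₁(V) ≥ … ≥ λ_N(V), we have Σ_{k=1}^{N} (λ_k(U) − λ_k(V))² ≤ ‖U − V‖_F². -/

import Mathlib

open Finset Matrix

private lemma mirsky_sum4_swap {M : Type*} [AddCommMonoid M] {N : ℕ}
    (F : Fin N → Fin N → Fin N → Fin N → M) :
    ∑ i, ∑ j, ∑ k, ∑ l, F i j k l = ∑ k, ∑ l, ∑ i, ∑ j, F i j k l :=
  calc ∑ i, ∑ j, ∑ k, ∑ l, F i j k l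
      = ∑ i, ∑ k, ∑ j, ∑ l, F i j k l :=
        Finset.sum_congr rfl fun _ _ => Finset.sum_comm
    _ = ∑ k, ∑ i, ∑ l, ∑ j, F i j k l := by
        rw [Finset.sum_comm]
        exact Finset.sum_congr rfl fun _ _ => Finset.sum_congr rfl fun _ _ => Finset.sum_comm
    _ = ∑ k, ∑ l, ∑ i, ∑ j, F i j k l :=
        Finset.sum_congr rfl fun _ _ => Finset.sum_comm

private lemma mirsky_cross {N : ℕ} (P Q : Matrix (Fin N) (Fin N) ℝ) (a b : Fin N → ℝ) :
    ∑ i, ∑ j, (∑ k, a k * P i k * P j k) * (∑ l, b l * Q i l * Q j l)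
      = ∑ k, ∑ l, (a k * b l) * ((∑ i, P i k * Q i l) * (∑ j, P j k * Q j l)) := by
  have h1 : ∑ i, ∑ j, (∑ k, a k * P i k * P j k) * (∑ l, b l * Q i l * Q j l)
      = ∑ i, ∑ j, ∑ k, ∑ l, (a k * P i k * P j k) * (b l * Q i l * Q j l) := by
    refine Finset.sum_congr rfl fun i _ => Finset.sum_congr rfl fun j _ => ?_
    rw [Finset.sum_mul_sum]
  have h2 : ∑ k, ∑ l, (a k * b l) * ((∑ i, P i k * Q i l) * (∑ j, P j k * Q j l))
      = ∑ k, ∑ l, ∑ i, ∑ j, (a k * P i k * P j k) * (b l * Q i l * Q j l) := by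
    refine Finset.sum_congr rfl fun k _ => Finset.sum_congr rfl fun l _ => ?_
    rw [Finset.sum_mul_sum, Finset.mul_sum]
    refine Finset.sum_congr rfl fun i _ => ?_
    rw [Finset.mul_sum]
    refine Finset.sum_congr rfl fun j _ => ?_
    ring
  rw [h1, h2, mirsky_sum4_swap]

private lemma mirsky_orth_cross {N : ℕ} (P Q : Matrix (Fin N) (Fin N) ℝ)
    (hQrow : ∀ i j, ∑ l, Q i l * Q j l = if i = j then 1 else 0)
    (hPcol : ∀ k l, ∑ i, P i k * P i l = if k = l then 1 else 0) (k : Fin N) :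
    ∑ l, (∑ i, P i k * Q i l) * (∑ j, P j k * Q j l) = 1 := by
  have h1 : ∑ l, (∑ i, P i k * Q i l) * (∑ j, P j k * Q j l)
      = ∑ l, ∑ i, ∑ j, (P i k * Q i l) * (P j k * Q j l) := by
    refine Finset.sum_congr rfl fun l _ => ?_
    rw [Finset.sum_mul_sum]
  rw [h1, Finset.sum_comm]
  have h2 : ∀ i, ∑ l, ∑ j, (P i k * Q i l) * (P j k * Q j l)
      = ∑ j, (P i k * P j k) * ∑ l, Q i l * Q j l := by
    intro i
    rw [Finset.sum_comm]
    refine Finset.sum_congr rfl fun j _ => ?_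
    rw [Finset.mul_sum]
    refine Finset.sum_congr rfl fun l _ => ?_
    ring
  calc ∑ i, ∑ l, ∑ j, (P i k * Q i l) * (P j k * Q j l)
      = ∑ i, ∑ j, (P i k * P j k) * ∑ l, Q i l * Q j l :=
        Finset.sum_congr rfl fun i _ => h2 i
    _ = ∑ i, P i k * P i k := by
        refine Finset.sum_congr rfl fun i _ => ?_
        simp [hQrow, mul_ite]
    _ = 1 := by simpa using hPcol k k

private lemma mirsky_decomp {N : ℕ} {U : Matrix (Fin N) (Fin N) ℝ} (hU : U.IsHermitian)
    (μ : Fin N → ℝ) (he : ∃ e : Equiv.Perm (Fin N), μ = hU.eigenvalues ∘ e) :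
    ∃ P : Matrix (Fin N) (Fin N) ℝ,
      (∀ k l, ∑ i, P i k * P i l = if k = l then 1 else 0) ∧
      (∀ i j, ∑ k, P i k * P j k = if i = j then 1 else 0) ∧
      (∀ i j, U i j = ∑ k, μ k * P i k * P j k) := by
  obtain ⟨e, rfl⟩ := he
  set W : Matrix (Fin N) (Fin N) ℝ := (hU.eigenvectorUnitary : Matrix (Fin N) (Fin N) ℝ) with hWdef
  have hW1 : star W * W = 1 := (Matrix.mem_unitaryGroup_iff').mp hU.eigenvectorUnitary.2
  have hW2 : W * star W = 1 := (Matrix.mem_unitaryGroup_iff).mp hU.eigenvectorUnitary.2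
  have hstar : ∀ i j, (star W) i j = W j i := fun i j => by
    simp [Matrix.star_apply]
  have hcol : ∀ k l, ∑ i, W i k * W i l = if k = l then 1 else 0 := by
    intro k l
    have := congrFun (congrFun hW1 k) l
    simpa [Matrix.mul_apply, hstar, Matrix.one_apply] using this
  have hrow : ∀ i j, ∑ k, W i k * W j k = if i = j then 1 else 0 := by
    intro i j
    have := congrFun (congrFun hW2 i) j
    simpa [Matrix.mul_apply, hstar, Matrix.one_apply] using this
  have hentry : ∀ i j, U i j = ∑ m, hU.eigenvalues m * W i m * W j m := by
    intro i j
    have h := hU.spectral_theorem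
    rw [Unitary.conjStarAlgAut_apply] at h
    have := congrFun (congrFun h i) j
    rw [this]
    rw [Matrix.mul_apply]
    congr 1; ext m
    rw [hstar, Matrix.mul_diagonal]
    simp only [hWdef, Matrix.IsHermitian.eigenvectorUnitary_apply, Function.comp_apply,
      RCLike.ofReal_real_eq_id, id_eq]
    ring
  refine ⟨fun i k => W i (e k), ?_, ?_, ?_⟩
  · intro k l
    have := hcol (e k) (e l)
    simpa [EmbeddingLike.apply_eq_iff_eq] using this
  · intro i j
    have := hrow i j
    rw [← this]
    exact Equiv.sum_comp e (fun m => W i m * W j m)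
  · intro i j
    rw [hentry i j, ← Equiv.sum_comp e (fun m => hU.eigenvalues m * W i m * W j m)]
    simp [Function.comp]

private lemma mirsky_rearr {N : ℕ} (a b : Fin N → ℝ) (ha : Antitone a) (hb : Antitone b)
    (D : Matrix (Fin N) (Fin N) ℝ) (hD : D ∈ doublyStochastic ℝ (Fin N)) :
    ∑ k, ∑ l, a k * b l * D k l ≤ ∑ k, a k * b k := by
  have hmono : Monovary a b := by
    intro i j hb'
    have hji : j ≤ i := by
      by_contra h
      exact absurd (hb (le_of_not_ge h)) (not_le.mpr hb')
    exact ha hji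
  obtain ⟨w, hw0, hw1, hwD⟩ := exists_eq_sum_perm_of_mem_doublyStochastic hD
  have hDkl : ∀ k l, D k l = ∑ σ : Equiv.Perm (Fin N), w σ * (if σ k = l then 1 else 0) := by
    intro k l
    rw [← hwD]
    simp only [Matrix.sum_apply, Matrix.smul_apply, Equiv.Perm.permMatrix,
      PEquiv.toMatrix_apply, Equiv.toPEquiv_apply, Option.mem_def, Option.some.injEq,
      smul_eq_mul]
  have step : ∀ k, ∑ l, a k * b l * D k l = ∑ σ : Equiv.Perm (Fin N), w σ * (a k * b (σ k)) := by
    intro k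
    simp only [hDkl, Finset.mul_sum]
    rw [Finset.sum_comm]
    refine Finset.sum_congr rfl fun σ _ => ?_
    simp only [mul_ite, mul_one, mul_zero, Finset.sum_ite_eq, Finset.mem_univ, if_true]
    ring
  calc ∑ k, ∑ l, a k * b l * D k l
      = ∑ k, ∑ σ : Equiv.Perm (Fin N), w σ * (a k * b (σ k)) :=
        Finset.sum_congr rfl fun k _ => step k
    _ = ∑ σ : Equiv.Perm (Fin N), ∑ k, w σ * (a k * b (σ k)) := Finset.sum_comm
    _ = ∑ σ : Equiv.Perm (Fin N), w σ * ∑ k, a k * b (σ k) := by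
        simp [Finset.mul_sum]
    _ ≤ ∑ σ : Equiv.Perm (Fin N), w σ * ∑ k, a k * b k := by
        apply Finset.sum_le_sum
        intro σ _
        exact mul_le_mul_of_nonneg_left (hmono.sum_mul_comp_perm_le_sum_mul) (hw0 σ)
    _ = ∑ k, a k * b k := by rw [← Finset.sum_mul, hw1, one_mul]

/-- Mirsky's theorem (Frobenius-norm case): if `μU` and `μV` list the
eigenvalues of real symmetric matrices `U` and `V` in decreasing order, then
`∑_k (λ_k(U) − λ_k(V))² ≤ ‖U − V‖_F²`. -/
theorem stmt_7 (N : ℕ) (U V : Matrix (Fin N) (Fin N) ℝ)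
    (hU : U.IsHermitian) (hV : V.IsHermitian)
    (μU μV : Fin N → ℝ) (hμU : Antitone μU) (hμV : Antitone μV)
    (heU : ∃ e : Equiv.Perm (Fin N), μU = hU.eigenvalues ∘ e)
    (heV : ∃ e : Equiv.Perm (Fin N), μV = hV.eigenvalues ∘ e) :
    ∑ k, (μU k - μV k) ^ 2 ≤ ∑ i, ∑ j, (U i j - V i j) ^ 2 := by
  obtain ⟨P, hPcol, hProw, hPU⟩ := mirsky_decomp hU μU heU
  obtain ⟨Q, hQcol, hQrow, hQV⟩ := mirsky_decomp hV μV heV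
  -- the doubly stochastic matrix of squared overlaps
  set D : Matrix (Fin N) (Fin N) ℝ :=
    fun k l => (∑ i, P i k * Q i l) * (∑ j, P j k * Q j l) with hDdef
  have hD : D ∈ doublyStochastic ℝ (Fin N) := by
    rw [mem_doublyStochastic_iff_sum]
    refine ⟨fun k l => mul_self_nonneg _, ?_, ?_⟩
    · intro k
      exact mirsky_orth_cross P Q hQrow hPcol k
    · intro l
      have h := mirsky_orth_cross Q P hProw hQcol l
      rw [← h]
      refine Finset.sum_congr rfl fun k _ => ?_
      simp only [hDdef]
      congr 1
      · exact Finset.sum_congr rfl fun i _ => mul_comm _ _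
      · exact Finset.sum_congr rfl fun j _ => mul_comm _ _
  -- traces
  have hUU : ∑ i, ∑ j, U i j * U i j = ∑ k, μU k * μU k := by
    have := mirsky_cross P P μU μU
    calc ∑ i, ∑ j, U i j * U i j
        = ∑ i, ∑ j, (∑ k, μU k * P i k * P j k) * (∑ l, μU l * P i l * P j l) := by
          refine Finset.sum_congr rfl fun i _ => Finset.sum_congr rfl fun j _ => ?_
          rw [hPU i j]
      _ = ∑ k, ∑ l, (μU k * μU l) * ((∑ i, P i k * P i l) * (∑ j, P j k * P j l)) :=
          mirsky_cross P P μU μU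
      _ = ∑ k, μU k * μU k := by
          refine Finset.sum_congr rfl fun k _ => ?_
          rw [Finset.sum_eq_single k]
          · simp [hPcol]
          · intro l _ hlk
            simp [hPcol, Ne.symm hlk]
          · simp
  have hVV : ∑ i, ∑ j, V i j * V i j = ∑ k, μV k * μV k := by
    calc ∑ i, ∑ j, V i j * V i j
        = ∑ i, ∑ j, (∑ k, μV k * Q i k * Q j k) * (∑ l, μV l * Q i l * Q j l) := by
          refine Finset.sum_congr rfl fun i _ => Finset.sum_congr rfl fun j _ => ?_
          rw [hQV i j]
      _ = ∑ k, ∑ l, (μV k * μV l) * ((∑ i, Q i k * Q i l) * (∑ j, Q j k * Q j l)) :=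
          mirsky_cross Q Q μV μV
      _ = ∑ k, μV k * μV k := by
          refine Finset.sum_congr rfl fun k _ => ?_
          rw [Finset.sum_eq_single k]
          · simp [hQcol]
          · intro l _ hlk
            simp [hQcol, Ne.symm hlk]
          · simp
  have hUV : ∑ i, ∑ j, U i j * V i j = ∑ k, ∑ l, μU k * μV l * D k l := by
    calc ∑ i, ∑ j, U i j * V i j
        = ∑ i, ∑ j, (∑ k, μU k * P i k * P j k) * (∑ l, μV l * Q i l * Q j l) := by
          refine Finset.sum_congr rfl fun i _ => Finset.sum_congr rfl fun j _ => ?_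
          rw [hPU i j, hQV i j]
      _ = ∑ k, ∑ l, (μU k * μV l) * ((∑ i, P i k * Q i l) * (∑ j, P j k * Q j l)) :=
          mirsky_cross P Q μU μV
      _ = ∑ k, ∑ l, μU k * μV l * D k l := rfl
  have key : ∑ i, ∑ j, U i j * V i j ≤ ∑ k, μU k * μV k := by
    rw [hUV]
    exact mirsky_rearr μU μV hμU hμV D hD
  have hexp : ∑ i, ∑ j, (U i j - V i j) ^ 2
      = (∑ i, ∑ j, U i j * U i j) - 2 * (∑ i, ∑ j, U i j * V i j)
        + (∑ i, ∑ j, V i j * V i j) := by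
    have h : ∀ x y : ℝ, (x - y) ^ 2 = x * x - 2 * (x * y) + y * y := by intros; ring
    simp only [h, Finset.sum_add_distrib, Finset.sum_sub_distrib, ← Finset.mul_sum]
  have hexp2 : ∑ k, (μU k - μV k) ^ 2
      = (∑ k, μU k * μU k) - 2 * (∑ k, μU k * μV k) + (∑ k, μV k * μV k) := by
    have h : ∀ x y : ℝ, (x - y) ^ 2 = x * x - 2 * (x * y) + y * y := by intros; ring
    simp only [h, Finset.sum_add_distrib, Finset.sum_sub_distrib, ← Finset.mul_sum]
  rw [hexp, hexp2, hUU, hVV]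
  linarith
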